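/- Let X ∈ ℝ^{d×n} have rank r, fix 1 ≤ k ≤ r, and write the singular value decomposition as X = U₁Σ₁V₁ᵀ + U₂Σ₂V₂ᵀ, where Σ₁ ∈ ℝ^{k×k} contains the top k singular values, Σ₂ ∈ ℝ^{(r−k)×(r−k)} contains the remaining singular values, and V₁ ∈ ℝ^{n×k}, V₂ ∈ ℝ^{n×(r−k)} have orthonormal columns. Let Ω ∈ ℝ^{n×m}, set Ω₁ = V₁ᵀΩ, Ω₂ = V₂ᵀΩ and Y = XΩ, and let P_Y be the orthogonal projection onto the column space of Y. If Ω₁ has full row rank, then ‖X − P_Y X‖₂² ≤ ‖Σ₂‖₂² + ‖Σ₂ Ω₂ Ω₁†‖₂², where Ω₁† denotes the Moore–Penrose pseudoinverse of Ω₁. -/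
import Mathlib

open Matrix Finset

/-- The spectral norm (largest singular value) of a real matrix, i.e. its ℓ₂→ℓ₂ operator norm. -/
noncomputable def specNorm {p q : ℕ} (M : Matrix (Fin p) (Fin q) ℝ) : ℝ :=
  ‖LinearMap.toContinuousLinearMap (Matrix.toEuclideanLin M)‖

/-- `P` is the orthogonal projection of `ℝ^d` onto the column space of `Y`. -/
def IsProjOntoColSpace {d m : ℕ} (P : Matrix (Fin d) (Fin d) ℝ)
    (Y : Matrix (Fin d) (Fin m) ℝ) : Prop :=
  P.IsSymm ∧ P * P = P ∧ LinearMap.range P.mulVecLin = LinearMap.range Y.mulVecLin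

open scoped Matrix.Norms.L2Operator

lemma specNorm_eq_l2 {p q : ℕ} (M : Matrix (Fin p) (Fin q) ℝ) : specNorm M = ‖M‖ := rfl

/-- C*-identity for the ℓ₂ operator norm with real transpose. -/
lemma l2_norm_transpose_mul_self {p q : ℕ} (A : Matrix (Fin p) (Fin q) ℝ) :
    ‖Aᵀ * A‖ = ‖A‖ * ‖A‖ := by
  have := Matrix.l2_opNorm_conjTranspose_mul_self A
  rwa [Matrix.conjTranspose_eq_transpose_of_trivial] at this

lemma l2_norm_transpose {p q : ℕ} (A : Matrix (Fin p) (Fin q) ℝ) : ‖Aᵀ‖ = ‖A‖ := by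
  have := Matrix.l2_opNorm_conjTranspose A
  rwa [Matrix.conjTranspose_eq_transpose_of_trivial] at this

lemma matrix_ext_of_mulVec {p q : ℕ} {A B : Matrix (Fin p) (Fin q) ℝ}
    (h : ∀ v, A *ᵥ v = B *ᵥ v) : A = B := by
  ext i j
  have := congrFun (h (Pi.single j 1)) i
  simpa [Matrix.mulVec, dotProduct, Pi.single_apply, mul_ite] using this

/-- **Deterministic bound of Halko–Martinsson–Tropp (Theorem 9.1)**: with `X = U₁Σ₁V₁ᵀ + U₂Σ₂V₂ᵀ`
the `k`-split SVD of `X`, `Ω₁ = V₁ᵀΩ`, `Ω₂ = V₂ᵀΩ` and `Y = XΩ`, if `Ω₁` has full row rank then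
`‖X − P_Y X‖₂² ≤ ‖Σ₂‖₂² + ‖Σ₂ Ω₂ Ω₁†‖₂²`. -/
theorem halko_deterministic_bound {d n r k m : ℕ} (hk1 : 1 ≤ k) (hkr : k ≤ r)
    (X : Matrix (Fin d) (Fin n) ℝ) (hrank : X.rank = r)
    (σ : ℕ → ℝ)
    (hσpos : ∀ i, 1 ≤ i → i ≤ r → 0 < σ i)
    (hσzero : ∀ i, r < i → σ i = 0)
    (hσmono : ∀ i j, 1 ≤ i → i ≤ j → σ j ≤ σ i)
    (U₁ : Matrix (Fin d) (Fin k) ℝ) (U₂ : Matrix (Fin d) (Fin (r - k)) ℝ)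
    (V₁ : Matrix (Fin n) (Fin k) ℝ) (V₂ : Matrix (Fin n) (Fin (r - k)) ℝ)
    (hU₁ : U₁ᵀ * U₁ = 1) (hU₂ : U₂ᵀ * U₂ = 1)
    (hV₁ : V₁ᵀ * V₁ = 1) (hV₂ : V₂ᵀ * V₂ = 1)
    (hU₁₂ : U₁ᵀ * U₂ = 0) (hV₁₂ : V₁ᵀ * V₂ = 0)
    (S₁ : Matrix (Fin k) (Fin k) ℝ)
    (hS₁ : S₁ = Matrix.diagonal (fun i => σ (i.1 + 1)))
    (S₂ : Matrix (Fin (r - k)) (Fin (r - k)) ℝ)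
    (hS₂ : S₂ = Matrix.diagonal (fun i => σ (k + i.1 + 1)))
    (hX : X = U₁ * S₁ * V₁ᵀ + U₂ * S₂ * V₂ᵀ)
    (Ω : Matrix (Fin n) (Fin m) ℝ)
    (Ω₁ : Matrix (Fin k) (Fin m) ℝ) (hΩ₁ : Ω₁ = V₁ᵀ * Ω)
    (Ω₂ : Matrix (Fin (r - k)) (Fin m) ℝ) (hΩ₂ : Ω₂ = V₂ᵀ * Ω)
    (hfullrank : Ω₁.rank = k)
    (Ω₁p : Matrix (Fin m) (Fin k) ℝ)
    (hp1 : Ω₁ * Ω₁p * Ω₁ = Ω₁) (hp2 : Ω₁p * Ω₁ * Ω₁p = Ω₁p)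
    (hp3 : (Ω₁ * Ω₁p)ᵀ = Ω₁ * Ω₁p) (hp4 : (Ω₁p * Ω₁)ᵀ = Ω₁p * Ω₁)
    (Pm : Matrix (Fin d) (Fin d) ℝ) (hP : IsProjOntoColSpace Pm (X * Ω)) :
    specNorm (X - Pm * X) ^ 2 ≤ specNorm S₂ ^ 2 + specNorm (S₂ * Ω₂ * Ω₁p) ^ 2 := by
  classical
  obtain ⟨hPsymm, hPidem, hPrange⟩ := hP
  -- Ω₁ has full row rank, so Ω₁ * Ω₁p = 1
  have hsurj : Function.Surjective Ω₁.mulVecLin := by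
    rw [← LinearMap.range_eq_top]
    apply Submodule.eq_top_of_finrank_eq
    rw [← Matrix.rank, hfullrank]
    simp [Module.finrank_pi]
  have hΩ1 : Ω₁ * Ω₁p = 1 := by
    apply matrix_ext_of_mulVec
    intro v
    obtain ⟨w, hw⟩ := hsurj v
    rw [Matrix.mulVecLin_apply] at hw
    rw [Matrix.one_mulVec, ← hw, Matrix.mulVec_mulVec, hp1]
  -- Pm fixes the column space of X * Ω
  have hPY : Pm * (X * Ω) = X * Ω := by
    apply matrix_ext_of_mulVec
    intro v
    have hv : (X * Ω) *ᵥ v ∈ LinearMap.range Pm.mulVecLin := by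
      rw [hPrange]; exact ⟨v, rfl⟩
    obtain ⟨w, hw⟩ := hv
    rw [Matrix.mulVecLin_apply] at hw
    rw [← Matrix.mulVec_mulVec, ← hw, Matrix.mulVec_mulVec, hPidem]
  -- the matrix M = S₂V₂ᵀ - F V₁ᵀ, F = S₂Ω₂Ω₁p
  have hΩ1' : V₁ᵀ * Ω * Ω₁p = 1 := by rw [← hΩ₁]; exact hΩ1
  have h1 : U₁ * S₁ * V₁ᵀ * Ω * (Ω₁p * V₁ᵀ) = U₁ * S₁ * V₁ᵀ := by
    rw [Matrix.mul_assoc (U₁ * S₁) V₁ᵀ Ω, Matrix.mul_assoc (U₁ * S₁) (V₁ᵀ * Ω) _,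
      ← Matrix.mul_assoc (V₁ᵀ * Ω) Ω₁p V₁ᵀ, hΩ1', Matrix.one_mul]
  have h2 : U₂ * S₂ * V₂ᵀ * Ω * (Ω₁p * V₁ᵀ) = U₂ * (S₂ * Ω₂ * Ω₁p * V₁ᵀ) := by
    rw [hΩ₂]
    simp only [Matrix.mul_assoc]
  have hXW : X - X * Ω * (Ω₁p * V₁ᵀ) = U₂ * (S₂ * V₂ᵀ - S₂ * Ω₂ * Ω₁p * V₁ᵀ) := by
    rw [Matrix.mul_sub]
    nth_rewrite 1 [hX]
    nth_rewrite 1 [hX]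
    rw [Matrix.add_mul, Matrix.add_mul, h1, h2, ← Matrix.mul_assoc U₂ S₂ V₂ᵀ]
    abel
  set MM : Matrix (Fin (r - k)) (Fin n) ℝ := S₂ * V₂ᵀ - S₂ * Ω₂ * Ω₁p * V₁ᵀ with hMM
  -- key identity
  have hkey : X - Pm * X = (1 - Pm) * (U₂ * MM) := by
    rw [← hXW, Matrix.sub_mul, Matrix.one_mul, Matrix.mul_sub,
      ← Matrix.mul_assoc Pm (X * Ω) (Ω₁p * V₁ᵀ), Matrix.mul_assoc X Ω (Ω₁p * V₁ᵀ), hPY,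
      ← Matrix.mul_assoc X Ω (Ω₁p * V₁ᵀ)]
    abel
  -- 1 - Pm is a contraction
  have hQs : (1 - Pm)ᵀ = 1 - Pm := by
    rw [Matrix.transpose_sub, Matrix.transpose_one, hPsymm.eq]
  have hQi : (1 - Pm) * (1 - Pm) = 1 - Pm := by
    rw [Matrix.sub_mul, Matrix.one_mul, Matrix.mul_sub, Matrix.mul_one, hPidem]
    abel
  have hQnorm : ‖(1 : Matrix (Fin d) (Fin d) ℝ) - Pm‖ ≤ 1 := by
    have h : ‖(1 : Matrix (Fin d) (Fin d) ℝ) - Pm‖ * ‖(1 : Matrix (Fin d) (Fin d) ℝ) - Pm‖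
        = ‖(1 : Matrix (Fin d) (Fin d) ℝ) - Pm‖ := by
      rw [← l2_norm_transpose_mul_self (1 - Pm), hQs, hQi]
    nlinarith [norm_nonneg ((1 : Matrix (Fin d) (Fin d) ℝ) - Pm)]
  -- U₂ is an isometry on the left
  have hUM : ‖U₂ * MM‖ = ‖MM‖ := by
    have h : ‖U₂ * MM‖ * ‖U₂ * MM‖ = ‖MM‖ * ‖MM‖ := by
      rw [← l2_norm_transpose_mul_self (U₂ * MM), ← l2_norm_transpose_mul_self MM,
        Matrix.transpose_mul, Matrix.mul_assoc MMᵀ U₂ᵀ (U₂ * MM),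
        ← Matrix.mul_assoc U₂ᵀ U₂ MM, hU₂, Matrix.one_mul]
    exact (mul_self_inj (norm_nonneg _) (norm_nonneg _)).mp h
  -- step 1
  have step1 : specNorm (X - Pm * X) ≤ ‖MM‖ := by
    rw [specNorm_eq_l2, hkey]
    calc ‖(1 - Pm) * (U₂ * MM)‖ ≤ ‖(1 : Matrix (Fin d) (Fin d) ℝ) - Pm‖ * ‖U₂ * MM‖ :=
          Matrix.l2_opNorm_mul _ _
      _ ≤ 1 * ‖U₂ * MM‖ := mul_le_mul_of_nonneg_right hQnorm (norm_nonneg _)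
      _ = ‖MM‖ := by rw [one_mul, hUM]
  -- MM * MMᵀ = S₂ S₂ᵀ + F Fᵀ
  have hV21 : V₂ᵀ * V₁ = 0 := by
    have := congrArg Matrix.transpose hV₁₂
    rwa [Matrix.transpose_mul, Matrix.transpose_transpose, Matrix.transpose_zero] at this
  have ha : S₂ * V₂ᵀ * (V₂ * S₂ᵀ) = S₂ * S₂ᵀ := by
    rw [Matrix.mul_assoc S₂ V₂ᵀ (V₂ * S₂ᵀ), ← Matrix.mul_assoc V₂ᵀ V₂ S₂ᵀ, hV₂, Matrix.one_mul]
  have hb : S₂ * V₂ᵀ * (V₁ * (S₂ * Ω₂ * Ω₁p)ᵀ) = 0 := by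
    rw [Matrix.mul_assoc S₂ V₂ᵀ _, ← Matrix.mul_assoc V₂ᵀ V₁ _, hV21, Matrix.zero_mul,
      Matrix.mul_zero]
  have hc : S₂ * Ω₂ * Ω₁p * V₁ᵀ * (V₂ * S₂ᵀ) = 0 := by
    rw [Matrix.mul_assoc _ V₁ᵀ _, ← Matrix.mul_assoc V₁ᵀ V₂ S₂ᵀ, hV₁₂, Matrix.zero_mul,
      Matrix.mul_zero]
  have hd : S₂ * Ω₂ * Ω₁p * V₁ᵀ * (V₁ * (S₂ * Ω₂ * Ω₁p)ᵀ) = (S₂ * Ω₂ * Ω₁p) * (S₂ * Ω₂ * Ω₁p)ᵀ := by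
    rw [Matrix.mul_assoc _ V₁ᵀ _, ← Matrix.mul_assoc V₁ᵀ V₁ _, hV₁, Matrix.one_mul]
  have hMMT : MM * MMᵀ = S₂ * S₂ᵀ + (S₂ * Ω₂ * Ω₁p) * (S₂ * Ω₂ * Ω₁p)ᵀ := by
    rw [hMM, Matrix.transpose_sub, Matrix.sub_mul, Matrix.mul_sub, Matrix.mul_sub,
      Matrix.transpose_mul (S₂ * Ω₂ * Ω₁p) V₁ᵀ, Matrix.transpose_transpose,
      Matrix.transpose_mul S₂ V₂ᵀ, Matrix.transpose_transpose, ha, hb, hc, hd]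
    abel
  -- ‖A Aᵀ‖ = ‖A‖²
  have hnormsq : ∀ {p q : ℕ} (A : Matrix (Fin p) (Fin q) ℝ), ‖A * Aᵀ‖ = ‖A‖ * ‖A‖ := by
    intro p q A
    have := l2_norm_transpose_mul_self Aᵀ
    rwa [Matrix.transpose_transpose, l2_norm_transpose] at this
  -- step 2
  have step2 : ‖MM‖ ^ 2 ≤ specNorm S₂ ^ 2 + specNorm (S₂ * Ω₂ * Ω₁p) ^ 2 := by
    rw [specNorm_eq_l2, specNorm_eq_l2, sq, sq, sq, ← hnormsq MM, hMMT]
    calc ‖S₂ * S₂ᵀ + (S₂ * Ω₂ * Ω₁p) * (S₂ * Ω₂ * Ω₁p)ᵀ‖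
        ≤ ‖S₂ * S₂ᵀ‖ + ‖(S₂ * Ω₂ * Ω₁p) * (S₂ * Ω₂ * Ω₁p)ᵀ‖ := norm_add_le _ _
      _ = ‖S₂‖ * ‖S₂‖ + ‖S₂ * Ω₂ * Ω₁p‖ * ‖S₂ * Ω₂ * Ω₁p‖ := by rw [hnormsq, hnormsq]
  calc specNorm (X - Pm * X) ^ 2 ≤ ‖MM‖ ^ 2 := by
        have h0 : (0 : ℝ) ≤ specNorm (X - Pm * X) := norm_nonneg _
        exact pow_le_pow_left₀ h0 step1 2
    _ ≤ _ := step2
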